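/- arXiv:2408.06372 — 7 statements merged into one kernel-verified Lean document; each statement's English description precedes it below -/
import Mathlib

section
/- Tropical Weil reciprocity on a segment (combinatorial form). Let n ≥ 2 be a natural number, let x : Fin n → ℝ be strictly monotone (the common breakpoints x_1 < x_2 < … < x_n of two piecewise linear functions on the segment [x_1, x_n]), and let F, G : Fin n → ℝ be the values of the two functions at these breakpoints. For each i with 1 ≤ i ≤ n−1 define the slopes k_i = (F(x_{i+1}) − F(x_i))/(x_{i+1} − x_i) and ℓ_i = (G(x_{i+1}) − G(x_i))/(x_{i+1} − x_i). Then ℓ_1·F(x_1) + Σ_{i=2}^{n−1} (ℓ_i − ℓ_{i−1})·F(x_i) − ℓ_{n−1}·F(x_n) = k_1·G(x_1) + Σ_{i=2}^{n−1} (k_i − k_{i−1})·G(x_i) − k_{n−1}·G(x_n). -/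
/-- Abel summation identity used below. -/
lemma abel_aux (a b : ℕ → ℝ) : ∀ m : ℕ,
    a 0 * b 0 + (∑ i ∈ Finset.range m, (a (i + 1) - a i) * b (i + 1)) - a m * b (m + 1)
      = ∑ i ∈ Finset.range (m + 1), a i * (b i - b (i + 1)) := by
  intro m
  induction m with
  | zero => simp; ring
  | succ m ih =>
    rw [Finset.sum_range_succ, Finset.sum_range_succ (fun i => a i * (b i - b (i+1)))]
    rw [← ih]; ring

/-- Tropical Weil reciprocity on a segment (combinatorial form): for two piecewise
linear functions on a segment with common breakpoints `x 0 < x 1 < … < x (n-1)`,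
values `F`, `G` at the breakpoints, and slopes `k`, `ℓ` given by difference quotients,
we have `Σ_x F(x)·ord_x G = Σ_x G(x)·ord_x F`. -/
theorem tropical_weil_reciprocity_segment_combinatorial
    (n : ℕ) (hn : 2 ≤ n) (x F G : Fin n → ℝ) (hx : StrictMono x)
    (k ℓ : ℕ → ℝ)
    (hk : ∀ i : ℕ, (h : i + 1 < n) →
      k i = (F ⟨i + 1, h⟩ - F ⟨i, by omega⟩) / (x ⟨i + 1, h⟩ - x ⟨i, by omega⟩))
    (hℓ : ∀ i : ℕ, (h : i + 1 < n) →
      ℓ i = (G ⟨i + 1, h⟩ - G ⟨i, by omega⟩) / (x ⟨i + 1, h⟩ - x ⟨i, by omega⟩)) :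
    ℓ 0 * F ⟨0, by omega⟩
      + (∑ i : Fin (n - 2), (ℓ (i.1 + 1) - ℓ i.1) * F ⟨i.1 + 1, by omega⟩)
      - ℓ (n - 2) * F ⟨n - 1, by omega⟩
    = k 0 * G ⟨0, by omega⟩
      + (∑ i : Fin (n - 2), (k (i.1 + 1) - k i.1) * G ⟨i.1 + 1, by omega⟩)
      - k (n - 2) * G ⟨n - 1, by omega⟩ := by
  set Fb : ℕ → ℝ := fun i => if h : i < n then F ⟨i, h⟩ else 0 with hFb
  set Gb : ℕ → ℝ := fun i => if h : i < n then G ⟨i, h⟩ else 0 with hGb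
  have hFb' : ∀ i (h : i < n), Fb i = F ⟨i, h⟩ := fun i h => by simp [hFb, h]
  have hGb' : ∀ i (h : i < n), Gb i = G ⟨i, h⟩ := fun i h => by simp [hGb, h]
  obtain ⟨m, hm⟩ : ∃ m, n = m + 2 := ⟨n - 2, by omega⟩
  subst hm
  show ℓ 0 * F ⟨0, by omega⟩
      + (∑ i : Fin m, (ℓ (i.1 + 1) - ℓ i.1) * F ⟨i.1 + 1, by omega⟩)
      - ℓ m * F ⟨m + 1, by omega⟩
    = k 0 * G ⟨0, by omega⟩
      + (∑ i : Fin m, (k (i.1 + 1) - k i.1) * G ⟨i.1 + 1, by omega⟩)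
      - k m * G ⟨m + 1, by omega⟩
  have e1 : ℓ 0 * F ⟨0, by omega⟩
      + (∑ i : Fin m, (ℓ (i.1 + 1) - ℓ i.1) * F ⟨i.1 + 1, by omega⟩)
      - ℓ m * F ⟨m + 1, by omega⟩
      = ∑ i ∈ Finset.range (m + 1), ℓ i * (Fb i - Fb (i + 1)) := by
    have hsum : (∑ i : Fin m, (ℓ (i.1 + 1) - ℓ i.1) * F ⟨i.1 + 1, by omega⟩)
        = ∑ i ∈ Finset.range m, (ℓ (i + 1) - ℓ i) * Fb (i + 1) := by
      rw [← Fin.sum_univ_eq_sum_range (fun i => (ℓ (i + 1) - ℓ i) * Fb (i + 1))]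
      exact Finset.sum_congr rfl fun i _ => by rw [hFb' (i.1+1) (by omega)]
    rw [hsum, ← hFb' 0 (by omega), ← hFb' (m+1) (by omega)]
    exact abel_aux ℓ Fb m
  have e2 : k 0 * G ⟨0, by omega⟩
      + (∑ i : Fin m, (k (i.1 + 1) - k i.1) * G ⟨i.1 + 1, by omega⟩)
      - k m * G ⟨m + 1, by omega⟩
      = ∑ i ∈ Finset.range (m + 1), k i * (Gb i - Gb (i + 1)) := by
    have hsum : (∑ i : Fin m, (k (i.1 + 1) - k i.1) * G ⟨i.1 + 1, by omega⟩)
        = ∑ i ∈ Finset.range m, (k (i + 1) - k i) * Gb (i + 1) := by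
      rw [← Fin.sum_univ_eq_sum_range (fun i => (k (i + 1) - k i) * Gb (i + 1))]
      exact Finset.sum_congr rfl fun i _ => by rw [hGb' (i.1+1) (by omega)]
    rw [hsum, ← hGb' 0 (by omega), ← hGb' (m+1) (by omega)]
    exact abel_aux k Gb m
  rw [e1, e2]
  apply Finset.sum_congr rfl
  intro i hi
  simp only [Finset.mem_range] at hi
  have h1 : i + 1 < m + 2 := by omega
  have h0 : i < m + 2 := by omega
  rw [hFb' i h0, hFb' (i+1) h1, hGb' i h0, hGb' (i+1) h1, hk i h1, hℓ i h1]
  have hxne : x ⟨i + 1, h1⟩ - x ⟨i, h0⟩ ≠ 0 := by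
    have := hx (show (⟨i, h0⟩ : Fin (m+2)) < ⟨i+1, h1⟩ by simp [Fin.lt_def])
    linarith
  field_simp
  ring
end

section
/- Tropical Weil reciprocity on a segment (explicit piecewise linear form). Let L > 0, let I and J be finite index types, let a : I → ℝ, b : J → ℝ, and let p : I → ℝ, q : J → ℝ take values in the open interval (0, L). Define f, g : ℝ → ℝ by f(x) = α + s·x + Σ_{i∈I} a_i·max(x − p_i, 0) and g(x) = β + t·x + Σ_{j∈J} b_j·max(x − q_j, 0), where α, β, s, t are real constants. Then t·f(0) + Σ_{j∈J} b_j·f(q_j) − (t + Σ_{j∈J} b_j)·f(L) = s·g(0) + Σ_{i∈I} a_i·g(p_i) − (s + Σ_{i∈I} a_i)·g(L). -/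
/-- Tropical Weil reciprocity on the segment `[0, L]` (explicit piecewise linear form):
for tropical quasi-meromorphic functions
`f x = α + s·x + Σ_i a_i·max (x - p_i) 0` and `g x = β + t·x + Σ_j b_j·max (x - q_j) 0`
with all breakpoints `p_i`, `q_j` in the open interval `(0, L)`, one has
`Σ_x f(x)·ord_x g = Σ_x g(x)·ord_x f`. -/
theorem tropical_weil_reciprocity_segment
    (L : ℝ) (hL : 0 < L) (I J : Type*) [Fintype I] [Fintype J]
    (a : I → ℝ) (b : J → ℝ) (p : I → ℝ) (q : J → ℝ)
    (hp : ∀ i, p i ∈ Set.Ioo 0 L) (hq : ∀ j, q j ∈ Set.Ioo 0 L)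
    (α β s t : ℝ) (f g : ℝ → ℝ)
    (hf : ∀ x : ℝ, f x = α + s * x + ∑ i, a i * max (x - p i) 0)
    (hg : ∀ x : ℝ, g x = β + t * x + ∑ j, b j * max (x - q j) 0) :
    t * f 0 + (∑ j, b j * f (q j)) - (t + ∑ j, b j) * f L
      = s * g 0 + (∑ i, a i * g (p i)) - (s + ∑ i, a i) * g L := by
  -- values at endpoints
  have hf0 : f 0 = α := by
    rw [hf]
    have h : ∀ i ∈ Finset.univ, a i * max ((0:ℝ) - p i) 0 = 0 := by
      intro i _
      rw [max_eq_right (by linarith [(hp i).1])]; ring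
    rw [Finset.sum_congr rfl h]; simp
  have hg0 : g 0 = β := by
    rw [hg]
    have h : ∀ j ∈ Finset.univ, b j * max ((0:ℝ) - q j) 0 = 0 := by
      intro j _
      rw [max_eq_right (by linarith [(hq j).1])]; ring
    rw [Finset.sum_congr rfl h]; simp
  have hfL : f L = α + s * L + ∑ i, a i * (L - p i) := by
    rw [hf]
    congr 1
    exact Finset.sum_congr rfl fun i _ => by
      rw [max_eq_left (by linarith [(hp i).2])]
  have hgL : g L = β + t * L + ∑ j, b j * (L - q j) := by
    rw [hg]
    congr 1
    exact Finset.sum_congr rfl fun j _ => by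
      rw [max_eq_left (by linarith [(hq j).2])]
  -- key double-sum identity
  have hterm : ∀ i j, b j * (a i * max (q j - p i) 0) - a i * (b j * max (p i - q j) 0)
      = a i * b j * q j - a i * b j * p i := by
    intro i j
    rcases le_total (q j) (p i) with h | h
    · rw [max_eq_right (by linarith), max_eq_left (by linarith)]; ring
    · rw [max_eq_left (by linarith), max_eq_right (by linarith)]; ring
  have key : (∑ j, b j * ∑ i, a i * max (q j - p i) 0)
      - (∑ i, a i * ∑ j, b j * max (p i - q j) 0)
      = (∑ i, a i) * (∑ j, b j * q j) - (∑ j, b j) * (∑ i, a i * p i) := by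
    have e1 : (∑ j, b j * ∑ i, a i * max (q j - p i) 0)
        = ∑ i, ∑ j, b j * (a i * max (q j - p i) 0) := by
      rw [Finset.sum_comm]
      exact Finset.sum_congr rfl fun j _ => Finset.mul_sum _ _ _
    have e2 : (∑ i, a i * ∑ j, b j * max (p i - q j) 0)
        = ∑ i, ∑ j, a i * (b j * max (p i - q j) 0) := by
      exact Finset.sum_congr rfl fun i _ => Finset.mul_sum _ _ _
    rw [e1, e2, ← Finset.sum_sub_distrib]
    have e3 : ∀ i ∈ Finset.univ, ((∑ j, b j * (a i * max (q j - p i) 0))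
        - ∑ j, a i * (b j * max (p i - q j) 0))
        = a i * (∑ j, b j * q j) - (∑ j, b j) * (a i * p i) := by
      intro i _
      rw [← Finset.sum_sub_distrib, Finset.mul_sum, Finset.sum_mul, ← Finset.sum_sub_distrib]
      exact Finset.sum_congr rfl fun j _ => by rw [hterm i j]; ring
    rw [Finset.sum_congr rfl e3, Finset.sum_sub_distrib, ← Finset.sum_mul, ← Finset.mul_sum]
  -- expand the sums of f (q j) and g (p i)
  have hF : (∑ j, b j * f (q j)) = (∑ j, b j) * α + s * (∑ j, b j * q j)
      + ∑ j, b j * ∑ i, a i * max (q j - p i) 0 := by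
    rw [show (∑ j, b j * f (q j)) = ∑ j, (b j * α + s * (b j * q j)
        + b j * ∑ i, a i * max (q j - p i) 0) from
      Finset.sum_congr rfl fun j _ => by rw [hf (q j)]; ring]
    rw [Finset.sum_add_distrib, Finset.sum_add_distrib, ← Finset.sum_mul, ← Finset.mul_sum]
  have hG : (∑ i, a i * g (p i)) = (∑ i, a i) * β + t * (∑ i, a i * p i)
      + ∑ i, a i * ∑ j, b j * max (p i - q j) 0 := by
    rw [show (∑ i, a i * g (p i)) = ∑ i, (a i * β + t * (a i * p i)
        + a i * ∑ j, b j * max (p i - q j) 0) from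
      Finset.sum_congr rfl fun i _ => by rw [hg (p i)]; ring]
    rw [Finset.sum_add_distrib, Finset.sum_add_distrib, ← Finset.sum_mul, ← Finset.mul_sum]
  have hAL : (∑ i, a i * (L - p i)) = (∑ i, a i) * L - ∑ i, a i * p i := by
    rw [Finset.sum_mul, ← Finset.sum_sub_distrib]
    exact Finset.sum_congr rfl fun i _ => by ring
  have hBL : (∑ j, b j * (L - q j)) = (∑ j, b j) * L - ∑ j, b j * q j := by
    rw [Finset.sum_mul, ← Finset.sum_sub_distrib]
    exact Finset.sum_congr rfl fun j _ => by ring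
  rw [hf0, hg0, hfL, hgL, hF, hG, hAL, hBL]
  linear_combination key
end

section
/- Existence of a potential for a degree-zero divisor on the real line. Let I be a finite index type, q : I → ℝ with Σ_{i∈I} q_i = 0, and p : I → ℝ. Define f : ℝ → ℝ by f(x) = Σ_{i∈I} q_i·max(x, p_i). Then: (a) f is continuous; (b) for every c : ℝ, derivWithin f (Set.Ici c) c − derivWithin f (Set.Iic c) c = Σ_{i∈I, p_i = c} q_i, i.e. the order of f at c equals the coefficient of c in the divisor Σ_i q_i·(p_i); (c) f(x) = 0 for every x ≥ max_i p_i and f(x) = Σ_{i∈I} q_i·p_i for every x ≤ min_i p_i (when I is nonempty), so f is eventually constant in both directions. -/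
lemma max_hasDerivWithinAt_Ici (a c : ℝ) :
    HasDerivWithinAt (fun x => max x a) (if a ≤ c then 1 else 0) (Set.Ici c) c := by
  split_ifs with h
  · exact (hasDerivWithinAt_id c _).congr
      (fun x hx => max_eq_left (h.trans hx)) (max_eq_left h)
  · push_neg at h
    refine (hasDerivWithinAt_const c _ a).congr_of_eventuallyEq ?_ (max_eq_right h.le)
    filter_upwards [Filter.mem_inf_of_left (Iio_mem_nhds h)] with x hx
    exact max_eq_right hx.le

lemma max_hasDerivWithinAt_Iic (a c : ℝ) :
    HasDerivWithinAt (fun x => max x a) (if a < c then 1 else 0) (Set.Iic c) c := by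
  split_ifs with h
  · refine (hasDerivWithinAt_id c _).congr_of_eventuallyEq ?_ (max_eq_left h.le)
    filter_upwards [Filter.mem_inf_of_left (Ioi_mem_nhds h)] with x hx
    exact max_eq_left hx.le
  · push_neg at h
    exact (hasDerivWithinAt_const c _ a).congr
      (fun x hx => max_eq_right (hx.trans h)) (max_eq_right ((le_refl c).trans h))

/-- Existence of a potential for a degree-zero divisor `Σ_i q_i·(p_i)` on the real line:
the function `f x = Σ_i q_i · max x (p_i)` is continuous, its order (right slope minus
left slope) at each point `c` is the coefficient of `c` in the divisor, and it is
eventually constant in both directions (zero to the right of all `p_i`, and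
`Σ_i q_i·p_i` to the left of all `p_i`). -/
theorem exists_potential_of_degree_zero_divisor
    (I : Type*) [Fintype I] (q p : I → ℝ) (hq : ∑ i, q i = 0)
    (f : ℝ → ℝ) (hf : ∀ x : ℝ, f x = ∑ i, q i * max x (p i)) :
    Continuous f ∧
    (∀ c : ℝ, derivWithin f (Set.Ici c) c - derivWithin f (Set.Iic c) c
        = ∑ i, if p i = c then q i else 0) ∧
    (∀ x : ℝ, (∀ i, p i ≤ x) → f x = 0) ∧
    (∀ x : ℝ, (∀ i, x ≤ p i) → f x = ∑ i, q i * p i) := by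
  have hfe : f = fun x => ∑ i, q i * max x (p i) := funext hf
  refine ⟨?_, ?_, ?_, ?_⟩
  · rw [hfe]
    exact continuous_finset_sum _ fun i _ =>
      (continuous_const.mul (continuous_id.max continuous_const))
  · intro c
    have hR : HasDerivWithinAt f (∑ i, q i * (if p i ≤ c then 1 else 0)) (Set.Ici c) c := by
      rw [hfe]
      exact HasDerivWithinAt.fun_sum fun i _ => (max_hasDerivWithinAt_Ici (p i) c).const_mul (q i)
    have hL : HasDerivWithinAt f (∑ i, q i * (if p i < c then 1 else 0)) (Set.Iic c) c := by
      rw [hfe]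
      exact HasDerivWithinAt.fun_sum fun i _ => (max_hasDerivWithinAt_Iic (p i) c).const_mul (q i)
    rw [hR.derivWithin (uniqueDiffOn_Ici c c Set.self_mem_Ici), hL.derivWithin (uniqueDiffOn_Iic c c Set.self_mem_Iic),
      ← Finset.sum_sub_distrib]
    refine Finset.sum_congr rfl fun i _ => ?_
    rcases lt_trichotomy (p i) c with h | h | h
    · simp [h.le, h, h.ne]
    · simp [h]
    · simp [h.ne', not_le.mpr h, not_lt.mpr h.le]
  · intro x hx
    rw [hf]
    have : ∀ i ∈ Finset.univ, q i * max x (p i) = q i * x := fun i _ => by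
      rw [max_eq_left (hx i)]
    rw [Finset.sum_congr rfl this, ← Finset.sum_mul, hq, zero_mul]
  · intro x hx
    rw [hf]
    exact Finset.sum_congr rfl fun i _ => by rw [max_eq_right (hx i)]
end

section
/- Uniqueness of the potential of a degree-zero divisor on the real line. Let I and J be finite index types, q : I → ℝ and r : J → ℝ with Σ_{i∈I} q_i = 0 and Σ_{j∈J} r_j = 0, and p : I → ℝ, s : J → ℝ. Suppose that for every c : ℝ one has Σ_{i∈I, p_i = c} q_i = Σ_{j∈J, s_j = c} r_j (the two divisors Σ_i q_i·(p_i) and Σ_j r_j·(s_j) coincide). Then the functions f(x) = Σ_{i∈I} q_i·max(x, p_i) and g(x) = Σ_{j∈J} r_j·max(x, s_j) are equal: f(x) = g(x) for all x ∈ ℝ. -/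
open Finset

/-- Grouping lemma: a sum `∑ i, q i * f (p i)` can be rewritten as a sum over any
finite set of points containing all the `p i`. -/
lemma sum_group_by_point {I : Type*} [Fintype I] (q : I → ℝ) (p : I → ℝ) (f : ℝ → ℝ)
    (T : Finset ℝ) (hT : ∀ i, p i ∈ T) :
    (∑ i, q i * f (p i)) = ∑ c ∈ T, (∑ i, if p i = c then q i else 0) * f c := by
  have : ∀ c ∈ T, (∑ i, if p i = c then q i else 0) * f c
      = ∑ i, if p i = c then q i * f c else 0 := by
    intro c _
    rw [Finset.sum_mul]
    exact Finset.sum_congr rfl fun i _ => by split <;> simp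
  rw [Finset.sum_congr rfl this, Finset.sum_comm]
  refine Finset.sum_congr rfl fun i _ => ?_
  rw [Finset.sum_ite_eq T (p i) (fun c => q i * f c), if_pos (hT i)]

/-- Uniqueness of the potential of a degree-zero divisor on the real line: if the two
degree-zero divisors `Σ_i q_i·(p_i)` and `Σ_j r_j·(s_j)` coincide (the total coefficient
at every point `c` is the same), then the associated potentials
`x ↦ Σ_i q_i·max x (p_i)` and `x ↦ Σ_j r_j·max x (s_j)` are equal. -/
theorem potential_unique_of_divisor_eq
    (I J : Type*) [Fintype I] [Fintype J]
    (q : I → ℝ) (r : J → ℝ) (p : I → ℝ) (s : J → ℝ)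
    (hq : ∑ i, q i = 0) (hr : ∑ j, r j = 0)
    (h : ∀ c : ℝ, (∑ i, if p i = c then q i else 0) = ∑ j, if s j = c then r j else 0) :
    ∀ x : ℝ, (∑ i, q i * max x (p i)) = ∑ j, r j * max x (s j) := by
  intro x
  set T : Finset ℝ := Finset.image p Finset.univ ∪ Finset.image s Finset.univ with hTdef
  have hTp : ∀ i, p i ∈ T := fun i =>
    Finset.mem_union_left _ (Finset.mem_image_of_mem p (Finset.mem_univ i))
  have hTs : ∀ j, s j ∈ T := fun j =>
    Finset.mem_union_right _ (Finset.mem_image_of_mem s (Finset.mem_univ j))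
  rw [sum_group_by_point q p (fun c => max x c) T hTp,
      sum_group_by_point r s (fun c => max x c) T hTs]
  exact Finset.sum_congr rfl fun c _ => by rw [h c]
end

section
/- Kirchhoff existence and uniqueness for the weighted graph Laplacian (discrete form of the potential theorem). Let V be a nonempty finite type and w : V → V → ℝ a symmetric function with w(u,v) ≥ 0 for all u, v and w(v,v) = 0 for all v (edge conductances). Assume the simple graph on V whose edges are the pairs {u, v} with w(u,v) > 0 is connected. Define the weighted Laplacian L : Matrix V V ℝ by L(u,u) = Σ_{z∈V} w(u,z) and L(u,v) = −w(u,v) for u ≠ v. Then for every q : V → ℝ with Σ_{v∈V} q(v) = 0 there exists f : V → ℝ with L.mulVec f = q; moreover, if g : V → ℝ also satisfies L.mulVec g = q, then there is a constant c ∈ ℝ with g(v) = f(v) + c for all v ∈ V. -/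
/-- Kirchhoff existence and uniqueness for the weighted graph Laplacian: for a connected
weighted graph with nonnegative symmetric conductances `w` (zero on the diagonal) and a
charge distribution `q` of total charge zero, there is a potential `f` with `L.mulVec f = q`,
where `L` is the weighted Laplacian, and any other solution differs from `f` by a constant. -/
theorem kirchhoff_laplacian_exists_unique
    (V : Type*) [Fintype V] [Nonempty V] [DecidableEq V]
    (w : V → V → ℝ) (hsymm : ∀ u v, w u v = w v u)
    (hnonneg : ∀ u v, 0 ≤ w u v) (hdiag : ∀ v, w v v = 0)
    (hconn : (SimpleGraph.fromRel (fun u v => 0 < w u v)).Connected)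
    (L : Matrix V V ℝ)
    (hL : ∀ u v, L u v = if u = v then ∑ z, w u z else - w u v)
    (q : V → ℝ) (hq : ∑ v, q v = 0) :
    ∃ f : V → ℝ, L.mulVec f = q ∧
      ∀ g : V → ℝ, L.mulVec g = q → ∃ c : ℝ, ∀ v, g v = f v + c := by
  classical
  -- Formula for the Laplacian action
  have hmul : ∀ (f : V → ℝ) (u : V), L.mulVec f u = ∑ v, w u v * (f u - f v) := by
    intro f u
    have hrow : ∀ v, L u v = (if u = v then ∑ z, w u z else 0) - w u v := by
      intro v; rw [hL]; by_cases h : u = v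
      · simp [h, hdiag]
      · simp [h]
    simp only [Matrix.mulVec, dotProduct]
    calc ∑ v, L u v * f v
        = ∑ v, ((if u = v then ∑ z, w u z else 0) * f v - w u v * f v) := by
          simp [hrow, sub_mul]
      _ = (∑ z, w u z) * f u - ∑ v, w u v * f v := by
          rw [Finset.sum_sub_distrib]
          congr 1
          simp [ite_mul, Finset.sum_ite_eq]
      _ = ∑ v, w u v * (f u - f v) := by
          rw [Finset.sum_mul, ← Finset.sum_sub_distrib]
          exact Finset.sum_congr rfl fun v _ => by ring
  -- Any element of the kernel is constant
  have hker : ∀ f : V → ℝ, L.mulVec f = 0 → ∀ u v, f u = f v := by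
    intro f hf
    have hE : ∑ u, ∑ v, w u v * (f u - f v) ^ 2 = 0 := by
      have h0 : ∑ u, f u * (∑ v, w u v * (f u - f v)) = 0 := by
        refine Finset.sum_eq_zero fun u _ => ?_
        rw [← hmul f u, hf]; simp
      have hswap : ∑ u, ∑ v, w u v * f u * (f u - f v)
          = ∑ u, ∑ v, w u v * f v * (f v - f u) := by
        rw [Finset.sum_comm]
        exact Finset.sum_congr rfl fun u _ => Finset.sum_congr rfl fun v _ => by
          rw [hsymm]
      have h1 : ∑ u, ∑ v, w u v * f u * (f u - f v) = 0 := by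
        rw [← h0]
        exact Finset.sum_congr rfl fun u _ => by
          rw [Finset.mul_sum]
          exact Finset.sum_congr rfl fun v _ => by ring
      have h2 : ∑ u, ∑ v, w u v * f v * (f v - f u) = 0 := by rw [← hswap]; exact h1
      calc ∑ u, ∑ v, w u v * (f u - f v) ^ 2
          = (∑ u, ∑ v, w u v * f u * (f u - f v))
            + ∑ u, ∑ v, w u v * f v * (f v - f u) := by
            rw [← Finset.sum_add_distrib]
            exact Finset.sum_congr rfl fun u _ => by
              rw [← Finset.sum_add_distrib]
              exact Finset.sum_congr rfl fun v _ => by ring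
        _ = 0 := by rw [h1, h2]; ring
    have hzero : ∀ u v, w u v * (f u - f v) ^ 2 = 0 := by
      intro u v
      have houter : ∀ u ∈ Finset.univ, (0:ℝ) ≤ ∑ v, w u v * (f u - f v) ^ 2 :=
        fun u _ => Finset.sum_nonneg fun v _ =>
          mul_nonneg (hnonneg u v) (sq_nonneg _)
      have hu := (Finset.sum_eq_zero_iff_of_nonneg houter).mp hE u (Finset.mem_univ u)
      exact (Finset.sum_eq_zero_iff_of_nonneg fun v _ =>
        mul_nonneg (hnonneg u v) (sq_nonneg _)).mp hu v (Finset.mem_univ v)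
    have hedge : ∀ u v, 0 < w u v → f u = f v := by
      intro u v hw
      have := hzero u v
      have h2 : (f u - f v) ^ 2 = 0 := by
        rcases mul_eq_zero.mp this with h | h
        · exact absurd h (ne_of_gt hw)
        · exact h
      have := pow_eq_zero_iff (n := 2) (by norm_num) |>.mp h2
      linarith [sub_eq_zero.mp this]
    intro u v
    obtain ⟨p⟩ := hconn.preconnected u v
    induction p with
    | nil => rfl
    | cons h p ih =>
      rw [SimpleGraph.fromRel_adj] at h
      obtain ⟨-, h1 | h1⟩ := h
      · exact (hedge _ _ h1).trans ih
      · exact (hedge _ _ ((hsymm _ _) ▸ h1)).trans ih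
  -- Linear-algebraic setup
  set T : (V → ℝ) →ₗ[ℝ] (V → ℝ) := Matrix.mulVecLin L with hT
  let φ : (V → ℝ) →ₗ[ℝ] ℝ :=
    { toFun := fun f => ∑ v, f v
      map_add' := fun a b => by simp [Finset.sum_add_distrib]
      map_smul' := fun c a => by simp [Finset.mul_sum] }
  have hTapp : ∀ f, T f = L.mulVec f := fun f => rfl
  -- column sums vanish: range T ≤ ker φ
  have hrange : LinearMap.range T ≤ LinearMap.ker φ := by
    rintro _ ⟨f, rfl⟩
    have hB : ∑ u, ∑ v, w u v * f v = ∑ u, ∑ v, w u v * f u := by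
      rw [Finset.sum_comm]
      exact Finset.sum_congr rfl fun u _ => Finset.sum_congr rfl fun v _ => by
        rw [hsymm]
    simp only [LinearMap.mem_ker, hTapp]
    show ∑ u, L.mulVec f u = 0
    calc ∑ u, L.mulVec f u = ∑ u, ∑ v, w u v * (f u - f v) := by
          exact Finset.sum_congr rfl fun u _ => hmul f u
      _ = (∑ u, ∑ v, w u v * f u) - ∑ u, ∑ v, w u v * f v := by
          rw [← Finset.sum_sub_distrib]
          exact Finset.sum_congr rfl fun u _ => by
            rw [← Finset.sum_sub_distrib]
            exact Finset.sum_congr rfl fun v _ => by ring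
      _ = 0 := by rw [hB]; ring
  -- kernel of T is the span of the constant vector
  have hone : (fun _ : V => (1:ℝ)) ≠ 0 := by
    intro h
    obtain v := Classical.arbitrary V
    have := congrFun h v
    norm_num at this
  have hconstker : ∀ c : ℝ, L.mulVec (fun _ => c) = 0 := by
    intro c; funext u; rw [hmul]; simp
  have hkerT : LinearMap.ker T = Submodule.span ℝ {fun _ : V => (1:ℝ)} := by
    apply le_antisymm
    · intro f hf
      obtain v0 := Classical.arbitrary V
      have hfc : f = f v0 • (fun _ : V => (1:ℝ)) := by
        funext v
        have := hker f (by simpa [hTapp] using hf) v v0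
        simp [this]
      rw [hfc]
      exact Submodule.smul_mem _ _ (Submodule.mem_span_singleton_self _)
    · rw [Submodule.span_le, Set.singleton_subset_iff]
      simp only [SetLike.mem_coe, LinearMap.mem_ker, hTapp]
      exact hconstker 1
  -- dimension count
  have hdimV : Module.finrank ℝ (V → ℝ) = Fintype.card V := by
    simp [Module.finrank_pi]
  have hdimkerT : Module.finrank ℝ (LinearMap.ker T) = 1 := by
    rw [hkerT]; exact finrank_span_singleton hone
  have hrnT := LinearMap.finrank_range_add_finrank_ker T
  have hφsurj : Function.Surjective φ := by
    intro r
    refine ⟨fun _ => r / Fintype.card V, ?_⟩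
    have hc : (Fintype.card V : ℝ) ≠ 0 := by
      exact_mod_cast Fintype.card_ne_zero
    show ∑ _v : V, r / (Fintype.card V : ℝ) = r
    rw [Finset.sum_const]
    simp [Finset.card_univ]
    field_simp
  have hrnφ := LinearMap.finrank_range_add_finrank_ker φ
  have hrφ : Module.finrank ℝ (LinearMap.range φ) = 1 := by
    rw [LinearMap.range_eq_top.mpr hφsurj]
    simp
  have heq : LinearMap.range T = LinearMap.ker φ := by
    apply Submodule.eq_of_le_of_finrank_le hrange
    rw [hdimV] at hrnT hrnφ
    omega
  have hqmem : q ∈ LinearMap.ker φ := hq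
  rw [← heq] at hqmem
  obtain ⟨f, hf⟩ := hqmem
  rw [hTapp] at hf
  refine ⟨f, hf, ?_⟩
  intro g hg
  obtain v0 := Classical.arbitrary V
  have hdiff : L.mulVec (g - f) = 0 := by
    rw [Matrix.mulVec_sub, hf, hg, sub_self]
  refine ⟨g v0 - f v0, fun v => ?_⟩
  have := hker (g - f) hdiff v v0
  simp only [Pi.sub_apply] at this
  linarith
end

section
/- Tropical Weil reciprocity on a segment (vanishing sum of Weil symbols). Let L > 0 and let f, g : ℝ → ℝ be given by f(x) = α + s·x + Σ_{i∈I} a_i·max(x − p_i, 0) and g(x) = β + t·x + Σ_{j∈J} b_j·max(x − q_j, 0), where I, J are finite index types, α, β, s, t ∈ ℝ, a : I → ℝ, b : J → ℝ, and all p_i, q_j lie in the open interval (0, L). For c ∈ (0, L) define ord_c h := derivWithin h (Set.Ici c) c − derivWithin h (Set.Iic c) c, and at the endpoints define ord_0 h := derivWithin h (Set.Ici 0) 0 and ord_L h := −derivWithin h (Set.Iic L) L. Let T be any finite subset of [0, L] containing 0, L, and all points p_i (i ∈ I) and q_j (j ∈ J). Then Σ_{c∈T} ( (ord_c g)·f(c)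 − (ord_c f)·g(c) ) = 0. -/
/-- The order of a tropical (quasi-)meromorphic function `h` at a point `c` of the
segment `[0, L]`: at an interior point it is the right slope minus the left slope,
at `0` it is the right slope, and at `L` it is minus the left slope. -/
noncomputable def tropOrdSeg (L : ℝ) (h : ℝ → ℝ) (c : ℝ) : ℝ :=
  if c = 0 then derivWithin h (Set.Ici (0 : ℝ)) 0
  else if c = L then - derivWithin h (Set.Iic L) L
  else derivWithin h (Set.Ici c) c - derivWithin h (Set.Iic c) c

lemma ramp_right (a p c : ℝ) :
    HasDerivWithinAt (fun x : ℝ => a * max (x - p) 0) (if p ≤ c then a else 0)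
      (Set.Ici c) c := by
  split_ifs with h
  · have h1 : HasDerivWithinAt (fun x : ℝ => a * (x - p)) a (Set.Ici c) c := by
      simpa using (((hasDerivWithinAt_id c (Set.Ici c)).sub_const p).const_mul a)
    refine h1.congr (fun y hy => ?_) ?_
    · rw [max_eq_left (by simp only [Set.mem_Ici] at hy; linarith)]
    · rw [max_eq_left (by linarith)]
  · push_neg at h
    have h1 : HasDerivWithinAt (fun _ : ℝ => (0:ℝ)) 0 (Set.Ici c) c :=
      hasDerivWithinAt_const c _ 0
    refine h1.congr_of_eventuallyEq ?_ ?_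
    · filter_upwards [(eventually_lt_nhds h).filter_mono nhdsWithin_le_nhds] with y hy
      rw [max_eq_right (by linarith), mul_zero]
    · rw [max_eq_right (by linarith), mul_zero]

lemma ramp_left (a p c : ℝ) :
    HasDerivWithinAt (fun x : ℝ => a * max (x - p) 0) (if p < c then a else 0)
      (Set.Iic c) c := by
  split_ifs with h
  · have h1 : HasDerivWithinAt (fun x : ℝ => a * (x - p)) a (Set.Iic c) c := by
      simpa using (((hasDerivWithinAt_id c (Set.Iic c)).sub_const p).const_mul a)
    refine h1.congr_of_eventuallyEq ?_ ?_
    · filter_upwards [(eventually_gt_nhds h).filter_mono nhdsWithin_le_nhds] with y hy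
      rw [max_eq_left (by linarith)]
    · rw [max_eq_left (by linarith)]
  · push_neg at h
    have h1 : HasDerivWithinAt (fun _ : ℝ => (0:ℝ)) 0 (Set.Iic c) c :=
      hasDerivWithinAt_const c _ 0
    refine h1.congr (fun y hy => ?_) ?_
    · rw [max_eq_right (by simp only [Set.mem_Iic] at hy; linarith), mul_zero]
    · rw [max_eq_right (by linarith), mul_zero]

lemma trop_right {I : Type*} [Fintype I] (a p : I → ℝ) (α s c : ℝ) :
    HasDerivWithinAt (fun x : ℝ => α + s * x + ∑ i, a i * max (x - p i) 0)
      (s + ∑ i, if p i ≤ c then a i else 0) (Set.Ici c) c := by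
  have h1 : HasDerivWithinAt (fun x : ℝ => α + s * x) s (Set.Ici c) c := by
    simpa using ((hasDerivWithinAt_id c (Set.Ici c)).const_mul s).const_add α
  exact h1.add (HasDerivWithinAt.fun_sum fun i _ => ramp_right (a i) (p i) c)

lemma trop_left {I : Type*} [Fintype I] (a p : I → ℝ) (α s c : ℝ) :
    HasDerivWithinAt (fun x : ℝ => α + s * x + ∑ i, a i * max (x - p i) 0)
      (s + ∑ i, if p i < c then a i else 0) (Set.Iic c) c := by
  have h1 : HasDerivWithinAt (fun x : ℝ => α + s * x) s (Set.Iic c) c := by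
    simpa using ((hasDerivWithinAt_id c (Set.Iic c)).const_mul s).const_add α
  exact h1.add (HasDerivWithinAt.fun_sum fun i _ => ramp_left (a i) (p i) c)

lemma tropOrd_formula {I : Type*} [Fintype I] (L : ℝ) (hL : 0 < L) (a p : I → ℝ)
    (hp : ∀ i, p i ∈ Set.Ioo 0 L) (α s : ℝ) (f : ℝ → ℝ)
    (hf : ∀ x : ℝ, f x = α + s * x + ∑ i, a i * max (x - p i) 0) (c : ℝ) :
    tropOrdSeg L f c =
      if c = 0 then s else if c = L then -(s + ∑ i, a i)
      else ∑ i, if p i = c then a i else 0 := by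
  have hfe : f = fun x => α + s * x + ∑ i, a i * max (x - p i) 0 := funext hf
  subst hfe
  have hR := (trop_right a p α s c).derivWithin ((uniqueDiffOn_Ici c) c Set.self_mem_Ici)
  have hLe := (trop_left a p α s c).derivWithin ((uniqueDiffOn_Iic c) c Set.self_mem_Iic)
  unfold tropOrdSeg
  split_ifs with h1 h2
  · subst h1
    rw [hR]
    have : ∀ i, ¬ (p i ≤ (0:ℝ)) := fun i => not_le.2 (hp i).1
    simp [this]
  · rw [← h2, hLe]
    have h3 : ∀ i, p i < c := fun i => h2 ▸ (hp i).2
    simp [h3]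
  · rw [hR, hLe]
    rw [show s + (∑ i, if p i ≤ c then a i else 0) - (s + ∑ i, if p i < c then a i else 0)
        = (∑ i, if p i ≤ c then a i else 0) - (∑ i, if p i < c then a i else 0) by ring,
      ← Finset.sum_sub_distrib]
    refine Finset.sum_congr rfl fun i _ => ?_
    rcases lt_trichotomy (p i) c with h | h | h
    · simp [h.le, h, h.ne]
    · simp [h, le_refl]
    · simp [not_le.2 h, h.ne', not_lt.2 h.le]


/-- Tropical Weil reciprocity on the segment `[0, L]` in symbol form: for tropical
quasi-meromorphic functions `f`, `g` with breakpoints in `(0, L)`, the sum of the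
tropical Weil symbols `[f, g]_c = ord_c g · f(c) − ord_c f · g(c)` over any finite
subset `T` of `[0, L]` containing `0`, `L` and all breakpoints vanishes. -/
theorem tropical_weil_reciprocity_symbols
    (L : ℝ) (hL : 0 < L) (I J : Type*) [Fintype I] [Fintype J]
    (a : I → ℝ) (b : J → ℝ) (p : I → ℝ) (q : J → ℝ)
    (hp : ∀ i, p i ∈ Set.Ioo 0 L) (hq : ∀ j, q j ∈ Set.Ioo 0 L)
    (α β s t : ℝ) (f g : ℝ → ℝ)
    (hf : ∀ x : ℝ, f x = α + s * x + ∑ i, a i * max (x - p i) 0)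
    (hg : ∀ x : ℝ, g x = β + t * x + ∑ j, b j * max (x - q j) 0)
    (T : Finset ℝ) (hT : ↑T ⊆ Set.Icc 0 L)
    (h0 : (0 : ℝ) ∈ T) (hLT : L ∈ T)
    (hpT : ∀ i, p i ∈ T) (hqT : ∀ j, q j ∈ T) :
    ∑ c ∈ T, (tropOrdSeg L g c * f c - tropOrdSeg L f c * g c) = 0 := by
  have hFo := tropOrd_formula L hL a p hp α s f hf
  have hGo := tropOrd_formula L hL b q hq β t g hg
  -- values of f and g
  have hf0 : f 0 = α := by
    rw [hf]
    rw [Finset.sum_eq_zero fun i _ => by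
      rw [max_eq_right (by linarith [(hp i).1]), mul_zero]]
    ring
  have hg0 : g 0 = β := by
    rw [hg]
    rw [Finset.sum_eq_zero fun j _ => by
      rw [max_eq_right (by linarith [(hq j).1]), mul_zero]]
    ring
  have hfL : f L = α + s * L + ∑ i, a i * (L - p i) := by
    rw [hf]
    congr 1
    exact Finset.sum_congr rfl fun i _ => by
      rw [max_eq_left (by linarith [(hp i).2])]
  have hgL : g L = β + t * L + ∑ j, b j * (L - q j) := by
    rw [hg]
    congr 1
    exact Finset.sum_congr rfl fun j _ => by
      rw [max_eq_left (by linarith [(hq j).2])]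
  -- split the sum
  set X : ℝ → ℝ := fun c => tropOrdSeg L g c * f c - tropOrdSeg L f c * g c with hX
  set T2 : Finset ℝ := (T.erase 0).erase L with hT2
  have hLmem : L ∈ T.erase 0 := Finset.mem_erase.2 ⟨hL.ne', hLT⟩
  have hsplit : ∑ c ∈ T, X c = X 0 + (X L + ∑ c ∈ T2, X c) := by
    rw [← Finset.add_sum_erase T X h0, ← Finset.add_sum_erase _ X hLmem]
  have hpT2 : ∀ i, p i ∈ T2 := fun i =>
    Finset.mem_erase.2 ⟨(hp i).2.ne, Finset.mem_erase.2 ⟨(hp i).1.ne', hpT i⟩⟩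
  have hqT2 : ∀ j, q j ∈ T2 := fun j =>
    Finset.mem_erase.2 ⟨(hq j).2.ne, Finset.mem_erase.2 ⟨(hq j).1.ne', hqT j⟩⟩
  -- interior contribution
  have hX2 : ∀ c ∈ T2, X c =
      (∑ j, if q j = c then b j else 0) * f c - (∑ i, if p i = c then a i else 0) * g c := by
    intro c hc
    have hc0 : c ≠ 0 := (Finset.mem_erase.1 (Finset.mem_erase.1 hc).2).1
    have hcL : c ≠ L := (Finset.mem_erase.1 hc).1
    rw [hX]
    simp only [hFo c, hGo c, if_neg hc0, if_neg hcL]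
  have hsum2 : ∑ c ∈ T2, X c =
      (∑ j, b j * f (q j)) - (∑ i, a i * g (p i)) := by
    rw [Finset.sum_congr rfl hX2, Finset.sum_sub_distrib]
    congr 1
    · simp_rw [Finset.sum_mul, ite_mul, zero_mul]
      rw [Finset.sum_comm]
      refine Finset.sum_congr rfl fun j _ => ?_
      rw [Finset.sum_ite_eq T2 (q j) (fun c => b j * f c), if_pos (hqT2 j)]
    · simp_rw [Finset.sum_mul, ite_mul, zero_mul]
      rw [Finset.sum_comm]
      refine Finset.sum_congr rfl fun i _ => ?_
      rw [Finset.sum_ite_eq T2 (p i) (fun c => a i * g c), if_pos (hpT2 i)]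
  -- endpoint contributions
  have hX0 : X 0 = t * α - s * β := by
    rw [hX]; simp [hFo 0, hGo 0, hf0, hg0]
  have hXL : X L = (-(t + ∑ j, b j)) * f L - (-(s + ∑ i, a i)) * g L := by
    rw [hX]; simp [hFo L, hGo L, hL.ne']
  rw [hsplit, hsum2, hX0, hXL, hfL, hgL]
  -- expand the interior sums
  have hq1 : ∑ j, b j * f (q j)
      = (∑ j, b j) * α + s * (∑ j, b j * q j)
        + ∑ j, ∑ i, b j * (a i * max (q j - p i) 0) := by
    rw [Finset.sum_mul, Finset.mul_sum, ← Finset.sum_add_distrib, ← Finset.sum_add_distrib]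
    refine Finset.sum_congr rfl fun j _ => ?_
    rw [hf, mul_add, Finset.mul_sum]
    ring
  have hp1 : ∑ i, a i * g (p i)
      = (∑ i, a i) * β + t * (∑ i, a i * p i)
        + ∑ i, ∑ j, a i * (b j * max (p i - q j) 0) := by
    rw [Finset.sum_mul, Finset.mul_sum, ← Finset.sum_add_distrib, ← Finset.sum_add_distrib]
    refine Finset.sum_congr rfl fun i _ => ?_
    rw [hg, mul_add, Finset.mul_sum]
    ring
  have hL1 : ∑ i, a i * (L - p i) = (∑ i, a i) * L - ∑ i, a i * p i := by
    rw [Finset.sum_mul, ← Finset.sum_sub_distrib]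
    exact Finset.sum_congr rfl fun i _ => by ring
  have hL2 : ∑ j, b j * (L - q j) = (∑ j, b j) * L - ∑ j, b j * q j := by
    rw [Finset.sum_mul, ← Finset.sum_sub_distrib]
    exact Finset.sum_congr rfl fun j _ => by ring
  have hMN : (∑ j, ∑ i, b j * (a i * max (q j - p i) 0))
      - (∑ i, ∑ j, a i * (b j * max (p i - q j) 0))
      = (∑ i, a i) * (∑ j, b j * q j) - (∑ j, b j) * (∑ i, a i * p i) := by
    rw [Finset.sum_comm (s := Finset.univ) (t := Finset.univ)
      (f := fun j i => b j * (a i * max (q j - p i) 0))]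
    have e1 : (∑ i, a i) * (∑ j, b j * q j) = ∑ i, ∑ j, a i * (b j * q j) := by
      rw [Finset.sum_mul]
      exact Finset.sum_congr rfl fun i _ => by rw [Finset.mul_sum]
    have e2 : (∑ j, b j) * (∑ i, a i * p i) = ∑ i, ∑ j, b j * (a i * p i) := by
      rw [Finset.mul_sum]
      exact Finset.sum_congr rfl fun i _ => by rw [Finset.sum_mul]
    rw [e1, e2]
    simp_rw [← Finset.sum_sub_distrib]
    refine Finset.sum_congr rfl fun i _ => Finset.sum_congr rfl fun j _ => ?_
    rcases le_total (p i) (q j) with h | h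
    · rw [max_eq_left (by linarith), max_eq_right (by linarith)]; ring
    · rw [max_eq_right (by linarith), max_eq_left (by linarith)]; ring
  rw [hq1, hp1, hL1, hL2]
  linear_combination hMN
end

section
/- The divisor of a tropical meromorphic function on a segment has degree zero. Let L > 0 and let f : ℝ → ℝ be given by f(x) = α + s·x + Σ_{i∈I} a_i·max(x − p_i, 0), where I is a finite index type, α, s ∈ ℝ, a : I → ℝ, and all p_i lie in the open interval (0, L). For c ∈ (0, L) define ord_c f := derivWithin f (Set.Ici c) c − derivWithin f (Set.Iic c) c, and at the endpoints define ord_0 f := derivWithin f (Set.Ici 0) 0 and ord_L f := −derivWithin f (Set.Iic L) L. Let T be any finite subset of [0, L] containing 0, L, and all points p_i (i ∈ I). Then Σ_{c∈T} ord_c f = 0. -/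
lemma tropAux_right {I : Type*} [Fintype I] (a p : I → ℝ) (α s : ℝ) (f : ℝ → ℝ)
    (hf : ∀ x : ℝ, f x = α + s * x + ∑ i, a i * max (x - p i) 0) (c : ℝ) :
    derivWithin f (Set.Ici c) c = s + ∑ i ∈ Finset.univ.filter (fun i => p i ≤ c), a i := by
  set S := Finset.univ.filter (fun i => p i ≤ c) with hS
  set g : ℝ → ℝ := fun x => α + s * x + ∑ i ∈ S, a i * (x - p i) with hg
  have key : ∀ x : ℝ, (∀ i, c < p i → x ≤ p i) → c ≤ x → f x = g x := by
    intro x hx hcx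
    rw [hf x, hg]
    congr 1
    rw [← Finset.sum_filter_add_sum_filter_not Finset.univ (fun i => p i ≤ c)]
    have h2 : ∑ i ∈ Finset.univ.filter (fun i => ¬ p i ≤ c), a i * max (x - p i) 0 = 0 := by
      apply Finset.sum_eq_zero
      intro i hi
      simp only [Finset.mem_filter, not_le] at hi
      have : x - p i ≤ 0 := by linarith [hx i hi.2]
      rw [max_eq_right this, mul_zero]
    rw [h2, add_zero]
    apply Finset.sum_congr rfl
    intro i hi
    simp only [hS, Finset.mem_filter] at hi
    rw [max_eq_left (by linarith [hi.2] : (0:ℝ) ≤ x - p i)]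
  have hder : HasDerivAt g (s + ∑ i ∈ S, a i) c := by
    have h1 : HasDerivAt (fun x : ℝ => α + s * x) s c := by
      simpa using ((hasDerivAt_id c).const_mul s).const_add α
    have h2 : HasDerivAt (fun x : ℝ => ∑ i ∈ S, a i * (x - p i)) (∑ i ∈ S, a i) c := by
      apply HasDerivAt.fun_sum
      intro i _
      simpa using ((hasDerivAt_id c).sub_const (p i)).const_mul (a i)
    exact h1.add h2
  have hev : f =ᶠ[nhdsWithin c (Set.Ici c)] g := by
    have hU : ∀ᶠ x in nhds c, ∀ i, c < p i → x ≤ p i := by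
      rw [Filter.eventually_all]
      intro i
      by_cases h : c < p i
      · filter_upwards [Iio_mem_nhds h] with x hx _
        exact le_of_lt hx
      · filter_upwards with x hx
        exact absurd hx h
    filter_upwards [nhdsWithin_le_nhds hU, eventually_mem_nhdsWithin] with x h1 h2
    exact key x h1 h2
  rw [hev.derivWithin_eq (key c (fun i h => le_of_lt h) le_rfl)]
  exact (hder.hasDerivWithinAt).derivWithin (uniqueDiffOn_Ici c c Set.self_mem_Ici)

lemma tropAux_left {I : Type*} [Fintype I] (a p : I → ℝ) (α s : ℝ) (f : ℝ → ℝ)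
    (hf : ∀ x : ℝ, f x = α + s * x + ∑ i, a i * max (x - p i) 0) (c : ℝ) :
    derivWithin f (Set.Iic c) c = s + ∑ i ∈ Finset.univ.filter (fun i => p i < c), a i := by
  set S := Finset.univ.filter (fun i => p i < c) with hS
  set g : ℝ → ℝ := fun x => α + s * x + ∑ i ∈ S, a i * (x - p i) with hg
  have key : ∀ x : ℝ, (∀ i, p i < c → p i ≤ x) → x ≤ c → f x = g x := by
    intro x hx hcx
    rw [hf x, hg]
    congr 1
    rw [← Finset.sum_filter_add_sum_filter_not Finset.univ (fun i => p i < c)]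
    have h2 : ∑ i ∈ Finset.univ.filter (fun i => ¬ p i < c), a i * max (x - p i) 0 = 0 := by
      apply Finset.sum_eq_zero
      intro i hi
      simp only [Finset.mem_filter, not_lt] at hi
      have : x - p i ≤ 0 := by linarith [hi.2]
      rw [max_eq_right this, mul_zero]
    rw [h2, add_zero]
    apply Finset.sum_congr rfl
    intro i hi
    simp only [hS, Finset.mem_filter] at hi
    rw [max_eq_left (by linarith [hx i hi.2] : (0:ℝ) ≤ x - p i)]
  have hder : HasDerivAt g (s + ∑ i ∈ S, a i) c := by
    have h1 : HasDerivAt (fun x : ℝ => α + s * x) s c := by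
      simpa using ((hasDerivAt_id c).const_mul s).const_add α
    have h2 : HasDerivAt (fun x : ℝ => ∑ i ∈ S, a i * (x - p i)) (∑ i ∈ S, a i) c := by
      apply HasDerivAt.fun_sum
      intro i _
      simpa using ((hasDerivAt_id c).sub_const (p i)).const_mul (a i)
    exact h1.add h2
  have hev : f =ᶠ[nhdsWithin c (Set.Iic c)] g := by
    have hU : ∀ᶠ x in nhds c, ∀ i, p i < c → p i ≤ x := by
      rw [Filter.eventually_all]
      intro i
      by_cases h : p i < c
      · filter_upwards [Ioi_mem_nhds h] with x hx _
        exact le_of_lt hx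
      · filter_upwards with x hx
        exact absurd hx h
    filter_upwards [nhdsWithin_le_nhds hU, eventually_mem_nhdsWithin] with x h1 h2
    exact key x h1 h2
  rw [hev.derivWithin_eq (key c (fun i h => le_of_lt h) le_rfl)]
  exact (hder.hasDerivWithinAt).derivWithin (uniqueDiffOn_Iic c c Set.self_mem_Iic)

/-- The divisor of a tropical quasi-meromorphic function on the segment `[0, L]` has
degree zero: the sum of the orders of `f` over any finite subset `T` of `[0, L]`
containing `0`, `L` and all breakpoints of `f` vanishes. -/
theorem tropical_divisor_degree_zero
    (L : ℝ) (hL : 0 < L) (I : Type*) [Fintype I]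
    (a : I → ℝ) (p : I → ℝ) (hp : ∀ i, p i ∈ Set.Ioo 0 L)
    (α s : ℝ) (f : ℝ → ℝ)
    (hf : ∀ x : ℝ, f x = α + s * x + ∑ i, a i * max (x - p i) 0)
    (T : Finset ℝ) (hT : ↑T ⊆ Set.Icc 0 L)
    (h0 : (0 : ℝ) ∈ T) (hLT : L ∈ T) (hpT : ∀ i, p i ∈ T) :
    ∑ c ∈ T, tropOrdSeg L f c = 0 := by
  classical
  have hL0 : L ≠ 0 := ne_of_gt hL
  have hLe : L ∈ T.erase 0 := Finset.mem_erase.2 ⟨hL0, hLT⟩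
  rw [← Finset.add_sum_erase T _ h0, ← Finset.add_sum_erase _ _ hLe]
  have e0 : tropOrdSeg L f 0 = s := by
    rw [tropOrdSeg, if_pos rfl, tropAux_right a p α s f hf]
    have : Finset.univ.filter (fun i => p i ≤ (0:ℝ)) = ∅ := by
      apply Finset.filter_false_of_mem
      intro i _
      exact not_le.2 (hp i).1
    rw [this, Finset.sum_empty, add_zero]
  have eL : tropOrdSeg L f L = -(s + ∑ i, a i) := by
    rw [tropOrdSeg, if_neg hL0, if_pos rfl, tropAux_left a p α s f hf]
    congr 2
    rw [Finset.filter_true_of_mem (fun i _ => (hp i).2)]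
  have eInt : ∀ c ∈ (T.erase 0).erase L,
      tropOrdSeg L f c = ∑ i ∈ Finset.univ.filter (fun i => p i = c), a i := by
    intro c hc
    have hcL := (Finset.mem_erase.1 hc).1
    have hc0 := (Finset.mem_erase.1 (Finset.mem_erase.1 hc).2).1
    rw [tropOrdSeg, if_neg hc0, if_neg hcL, tropAux_right a p α s f hf,
      tropAux_left a p α s f hf]
    have hsplit : Finset.univ.filter (fun i => p i ≤ c)
        = Finset.univ.filter (fun i => p i < c) ∪ Finset.univ.filter (fun i => p i = c) := by
      ext i; simp [le_iff_lt_or_eq]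
    have hdisj : Disjoint (Finset.univ.filter (fun i => p i < c))
        (Finset.univ.filter (fun i => p i = c)) := by
      rw [Finset.disjoint_filter]
      intro i _ h1 h2
      exact absurd h2 (ne_of_lt h1)
    rw [hsplit, Finset.sum_union hdisj]
    ring
  rw [e0, eL, Finset.sum_congr rfl eInt]
  have : ∑ c ∈ (T.erase 0).erase L, ∑ i ∈ Finset.univ.filter (fun i => p i = c), a i
      = ∑ i, a i := by
    apply Finset.sum_fiberwise_of_maps_to
    intro i _
    exact Finset.mem_erase.2 ⟨ne_of_lt (hp i).2, Finset.mem_erase.2 ⟨ne_of_gt (hp i).1, hpT i⟩⟩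
  rw [this]; ring
end
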